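/- For every n ≥ 1, the number a_n of DAGs on vertex set {1,…,n} in which every edge is protected satisfies the recursion a_n = Σ_{m=1}^{n} (−1)^{m+1} · C(n,m) · (2^{n−m} − (n−m))^m · a_{n−m}, with a_0 = 1 (the identity being an identity of integers, where C(n,m) is the binomial coefficient). -/

import Mathlib

def IsDag {V : Type*} (E : V → V → Prop) : Prop :=
  Irreflexive E ∧ Irreflexive (Relation.TransGen E)

def pa {V : Type*} (E : V → V → Prop) (b : V) : Set V := {a | E a b}

def IsProtectedEdge {V : Type*} (E : V → V → Prop) (a b : V) : Prop :=
  pa E b \ {a} ≠ pa E a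

noncomputable def essentialCount (k : ℕ) : ℕ :=
  Nat.card {E : Fin k → Fin k → Bool //
    IsDag (fun a b => E a b = true) ∧
    ∀ a b : Fin k, E a b = true → IsProtectedEdge (fun x y => E x y = true) a b}

def Ess {V : Type*} (E : V → V → Bool) : Prop :=
  IsDag (fun a b => E a b = true) ∧
    ∀ a b : V, E a b = true → IsProtectedEdge (fun x y => E x y = true) a b

def Sink {V : Type*} (E : V → V → Bool) (v : V) : Prop := ∀ x, E v x = false

lemma essentialCount_eq (k : ℕ) :
    essentialCount k = Nat.card {E : Fin k → Fin k → Bool // Ess E} := rfl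

section transport
variable {α β : Type*} (e : α ≃ β)

def mapE (E : α → α → Bool) : β → β → Bool := fun x y => E (e.symm x) (e.symm y)

lemma transGen_mapE {E : α → α → Bool} {x y : β}
    (h : Relation.TransGen (fun x y => mapE e E x y = true) x y) :
    Relation.TransGen (fun a b => E a b = true) (e.symm x) (e.symm y) :=
  h.lift e.symm (fun a b hab => hab)

lemma transGen_mapE' {E : α → α → Bool} {a b : α}
    (h : Relation.TransGen (fun a b => E a b = true) a b) :
    Relation.TransGen (fun x y => mapE e E x y = true) (e a) (e b) :=
  h.lift e (fun a b hab => by simpa [mapE, Function.onFun] using hab)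

lemma protected_mapE {E : α → α → Bool} (a b : α) :
    IsProtectedEdge (fun x y => mapE e E x y = true) (e a) (e b) ↔
      IsProtectedEdge (fun x y => E x y = true) a b := by
  unfold IsProtectedEdge pa mapE
  rw [not_iff_not]
  constructor
  · intro h
    ext z
    have := Set.ext_iff.1 h (e z)
    simpa using this
  · intro h
    ext w
    have := Set.ext_iff.1 h (e.symm w)
    simp only [Set.mem_diff, Set.mem_setOf_eq, Set.mem_singleton_iff] at this ⊢
    rw [show (w = e a) ↔ (e.symm w = a) by rw [Equiv.symm_apply_eq]]
    simpa using this

lemma ess_mapE {E : α → α → Bool} : Ess (mapE e E) ↔ Ess E := by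
  constructor
  · rintro ⟨⟨h1, h2⟩, h3⟩
    refine ⟨⟨fun a ha => h1 (e a) (by simpa [mapE] using ha), fun a ha => h2 (e a) ?_⟩, ?_⟩
    · exact transGen_mapE' e ha
    · intro a b hab
      exact (protected_mapE e a b).1 (h3 (e a) (e b) (by simpa [mapE] using hab))
  · rintro ⟨⟨h1, h2⟩, h3⟩
    refine ⟨⟨fun x hx => h1 (e.symm x) hx, fun x hx => ?_⟩, ?_⟩
    · exact h2 (e.symm x) (transGen_mapE e hx)
    · intro x y hxy
      have := h3 (e.symm x) (e.symm y) hxy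
      have h4 := (protected_mapE e (e.symm x) (e.symm y)).2 this
      simpa using h4

lemma sink_mapE {E : α → α → Bool} (v : α) : Sink (mapE e E) (e v) ↔ Sink E v := by
  constructor
  · intro h x
    have := h (e x)
    simpa [mapE] using this
  · intro h x
    simp only [mapE, Equiv.symm_apply_apply]
    exact h _

def essSinkEquiv (T : Set α) (T' : Set β) (hT : ∀ v, v ∈ T ↔ e v ∈ T') :
    {E : α → α → Bool // Ess E ∧ ∀ v ∈ T, Sink E v} ≃
      {E' : β → β → Bool // Ess E' ∧ ∀ w ∈ T', Sink E' w} where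
  toFun := fun ⟨E, hE⟩ => ⟨mapE e E, (ess_mapE e).2 hE.1, by
    intro w hw
    have := hE.2 (e.symm w) (by rw [hT]; simpa using hw)
    simpa using (sink_mapE e (e.symm w)).2 this⟩
  invFun := fun ⟨E', hE'⟩ => ⟨mapE e.symm E', (ess_mapE e.symm).2 hE'.1, by
    intro v hv
    have := hE'.2 (e v) ((hT v).1 hv)
    have := (sink_mapE e.symm (e v)).2 this
    simpa using this⟩
  left_inv := fun ⟨E, hE⟩ => by
    ext x y
    simp [mapE]
  right_inv := fun ⟨E', hE'⟩ => by
    ext x y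
    simp [mapE]

end transport

section sum
variable {β γ : Type*} [DecidableEq β]

def buildE (F : β → β → Bool) (P : γ → β → Bool) : β ⊕ γ → β ⊕ γ → Bool
  | Sum.inl a, Sum.inl b => F a b
  | Sum.inl a, Sum.inr v => P v a
  | Sum.inr _, _ => false

def Good (F : β → β → Bool) (P : β → Bool) : Prop :=
  ∀ a : β, P ≠ fun x => F x a || decide (x = a)

lemma eq_buildE (E : β ⊕ γ → β ⊕ γ → Bool) (h : ∀ v : γ, Sink E (Sum.inr v)) :
    E = buildE (fun a b => E (.inl a) (.inl b)) (fun v a => E (.inl a) (.inr v)) := by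
  funext x y
  rcases x with a | v
  · rcases y with b | w <;> rfl
  · exact h v y

lemma transGen_buildE {F : β → β → Bool} {P : γ → β → Bool} {x : β ⊕ γ} {b : β}
    (h : Relation.TransGen (fun x y => buildE F P x y = true) x (Sum.inl b)) :
    ∃ a : β, x = Sum.inl a ∧ Relation.TransGen (fun a b => F a b = true) a b := by
  generalize hy : (Sum.inl b : β ⊕ γ) = y at h
  induction h generalizing b with
  | single h =>
    rcases x with a | v
    · subst hy; exact ⟨a, rfl, Relation.TransGen.single h⟩
    · simp [buildE] at h
  | tail h1 h2 ih =>
    rename_i c _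
    rcases c with a' | v
    · obtain ⟨a, hx, ht⟩ := ih rfl
      subst hy
      exact ⟨a, hx, ht.tail h2⟩
    · simp [buildE] at h2

lemma isDag_buildE {F : β → β → Bool} {P : γ → β → Bool} :
    IsDag (fun x y => buildE F P x y = true) ↔ IsDag (fun a b => F a b = true) := by
  constructor
  · rintro ⟨h1, h2⟩
    refine ⟨fun a ha => h1 (Sum.inl a) ha, fun a ha => h2 (Sum.inl a) ?_⟩
    exact ha.lift Sum.inl (fun x y h => h)
  · rintro ⟨h1, h2⟩
    constructor
    · rintro (a | v) h
      · exact h1 a h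
      · simp [buildE] at h
    · rintro (a | v) h
      · obtain ⟨a', ha', ht⟩ := transGen_buildE h
        cases ha'
        exact h2 _ ht
      · obtain ⟨c, hc, -⟩ := Relation.TransGen.head'_iff.1 h
        simp [buildE] at hc

lemma protected_buildE_inl {F : β → β → Bool} {P : γ → β → Bool} (a b : β) :
    IsProtectedEdge (fun x y => buildE F P x y = true) (Sum.inl a) (Sum.inl b) ↔
      IsProtectedEdge (fun x y => F x y = true) a b := by
  unfold IsProtectedEdge pa
  rw [not_iff_not, Set.ext_iff, Set.ext_iff]
  constructor
  · intro h z
    have := h (Sum.inl z)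
    simpa [buildE] using this
  · rintro h (z | v)
    · simpa [buildE] using h z
    · simp [buildE]

lemma unprotected_buildE_inr {F : β → β → Bool} {P : γ → β → Bool}
    (hF : Irreflexive fun a b => F a b = true) (a : β) (v : γ) (hPa : P v a = true) :
    (¬ IsProtectedEdge (fun x y => buildE F P x y = true) (Sum.inl a) (Sum.inr v))
      ↔ P v = fun x => F x a || decide (x = a) := by
  unfold IsProtectedEdge pa
  rw [not_not, Set.ext_iff]
  constructor
  · intro h
    funext x
    have hx := h (Sum.inl x)
    simp only [Set.mem_diff, Set.mem_setOf_eq, Set.mem_singleton_iff, buildE,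
      Sum.inl.injEq] at hx
    by_cases hxa : x = a
    · subst hxa
      simp [hPa]
    · cases hp : P v x
      · cases hf : F x a
        · simp [hxa]
        · exact absurd (hx.2 hf) (by simp [hp, hxa])
      · have := hx.1 ⟨hp, hxa⟩
        simp [this, hxa]
  · intro h z
    rcases z with x | w
    · have hx := congrFun h x
      simp only [Set.mem_diff, Set.mem_setOf_eq, Set.mem_singleton_iff, buildE, Sum.inl.injEq, hx]
      constructor
      · rintro ⟨h1, h2⟩
        simpa [h2] using h1
      · intro h1
        have hxa : x ≠ a := by
          rintro rfl
          exact hF x h1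
        simp [h1, hxa]
    · simp [buildE]

lemma ess_buildE {F : β → β → Bool} {P : γ → β → Bool} :
    Ess (buildE F P) ↔ Ess F ∧ ∀ v, Good F (P v) := by
  constructor
  · rintro ⟨hDag, hProt⟩
    have hF : IsDag (fun a b => F a b = true) := isDag_buildE.1 hDag
    refine ⟨⟨hF, ?_⟩, ?_⟩
    · intro a b hab
      exact (protected_buildE_inl a b).1 (hProt (Sum.inl a) (Sum.inl b) hab)
    · intro v a hPeq
      have hPa : P v a = true := by
        have := congrFun hPeq a
        simp at this
        exact this
      have hprot := hProt (Sum.inl a) (Sum.inr v) hPa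
      exact ((unprotected_buildE_inr hF.1 a v hPa).2 hPeq) hprot
  · rintro ⟨⟨hF, hProt⟩, hGood⟩
    refine ⟨isDag_buildE.2 hF, ?_⟩
    rintro (a | v) (b | w) h
    · exact (protected_buildE_inl a b).2 (hProt a b h)
    · by_contra hcon
      exact hGood w a ((unprotected_buildE_inr hF.1 a w h).1 hcon)
    · simp [buildE] at h
    · simp [buildE] at h

def sumEquiv :
    {E : β ⊕ γ → β ⊕ γ → Bool // Ess E ∧ ∀ v ∈ Set.range (Sum.inr : γ → β ⊕ γ), Sink E v} ≃
      Σ F : {F : β → β → Bool // Ess F}, (γ → {P : β → Bool // Good F.1 P}) where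
  toFun E :=
    have hE : Ess (buildE (fun a b => E.1 (.inl a) (.inl b)) (fun v a => E.1 (.inl a) (.inr v))) := by
      rw [← eq_buildE E.1 (fun v => E.2.2 _ ⟨v, rfl⟩)]; exact E.2.1
    ⟨⟨fun a b => E.1 (.inl a) (.inl b), (ess_buildE.1 hE).1⟩,
      fun v => ⟨fun a => E.1 (.inl a) (.inr v), (ess_buildE.1 hE).2 v⟩⟩
  invFun FP :=
    ⟨buildE FP.1.1 (fun v => (FP.2 v).1),
      ess_buildE.2 ⟨FP.1.2, fun v => (FP.2 v).2⟩,
      by rintro _ ⟨v, rfl⟩ x; rfl⟩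
  left_inv E := Subtype.ext (eq_buildE E.1 (fun v => E.2.2 _ ⟨v, rfl⟩)).symm
  right_inv FP := rfl

end sum

section count
variable {β γ : Type*} [Fintype β] [Fintype γ] [DecidableEq β] [DecidableEq γ]

lemma bad_injective {F : β → β → Bool} (hF : IsDag fun a b => F a b = true) :
    Function.Injective (fun a : β => fun x => F x a || decide (x = a)) := by
  intro a a' h
  by_contra hne
  have h1 : F a a' = true := by
    have hc := congrFun h a
    simp [hne] at hc
    exact hc
  have h2 : F a' a = true := by
    have hc := congrFun h a'
    simp [Ne.symm hne] at hc
    exact hc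
  exact hF.2 a (Relation.TransGen.tail (Relation.TransGen.single h1) h2)

lemma card_good {F : β → β → Bool} (hF : IsDag fun a b => F a b = true) :
    Nat.card {P : β → Bool // Good F P} = 2 ^ Fintype.card β - Fintype.card β := by
  classical
  have heq : ∀ P : β → Bool,
      Good F P ↔ ¬ P ∈ Set.range (fun a : β => fun x => F x a || decide (x = a)) := by
    intro P
    simp only [Good, Set.mem_range, not_exists]
    exact ⟨fun h a ha => h a ha.symm, fun h a ha => h a ha.symm⟩
  have hr : Fintype.card
      {x // x ∈ Set.range (fun a : β => fun x => F x a || decide (x = a))} = Fintype.card β := by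
    rw [← Nat.card_eq_fintype_card, ← Nat.card_eq_fintype_card]
    exact Nat.card_range_of_injective (bad_injective hF)
  rw [Nat.card_congr (Equiv.subtypeEquivRight heq), Nat.card_eq_fintype_card,
    Fintype.card_subtype_compl, hr, Fintype.card_fun, Fintype.card_bool]

lemma card_sigma_good :
    Nat.card (Σ F : {F : β → β → Bool // Ess F}, (γ → {P : β → Bool // Good F.1 P})) =
      (2 ^ Fintype.card β - Fintype.card β) ^ Fintype.card γ *
        Nat.card {F : β → β → Bool // Ess F} := by
  classical
  letI : Fintype {F : β → β → Bool // Ess F} := Fintype.ofFinite _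
  rw [Nat.card_eq_fintype_card, Fintype.card_sigma]
  have hconst : ∀ F : {F : β → β → Bool // Ess F},
      Fintype.card (γ → {P : β → Bool // Good F.1 P}) =
        (2 ^ Fintype.card β - Fintype.card β) ^ Fintype.card γ := by
    intro F
    rw [Fintype.card_fun, ← Nat.card_eq_fintype_card, card_good F.2.1]
  rw [Finset.sum_congr rfl (fun F _ => hconst F), Finset.sum_const, Finset.card_univ,
    smul_eq_mul, Nat.card_eq_fintype_card, Nat.mul_comm]

end count

lemma exists_sink {α : Type*} [Finite α] [Nonempty α] {E : α → α → Bool}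
    (h : IsDag fun a b => E a b = true) : ∃ v, Sink E v := by
  haveI : IsTrans α (flip (Relation.TransGen fun a b => E a b = true)) :=
    ⟨fun a b c hab hbc => Relation.TransGen.trans hbc hab⟩
  haveI : IsIrrefl α (flip (Relation.TransGen fun a b => E a b = true)) :=
    ⟨fun a ha => h.2 a ha⟩
  have hwf := Finite.wellFounded_of_trans_of_irrefl
    (flip (Relation.TransGen fun a b => E a b = true))
  obtain ⟨m, -, hm⟩ := hwf.has_min Set.univ ⟨Classical.arbitrary α, trivial⟩
  refine ⟨m, fun x => ?_⟩
  by_contra hx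
  simp only [Bool.not_eq_false] at hx
  exact hm x trivial (Relation.TransGen.single hx)

lemma card_with_sinks {n m : ℕ} (S : Finset (Fin n)) (hS : S.card = m) :
    Nat.card {E : Fin n → Fin n → Bool // Ess E ∧ ∀ v ∈ S, Sink E v} =
      (2 ^ (n - m) - (n - m)) ^ m * essentialCount (n - m) := by
  classical
  have hcS : Fintype.card {x // x ∈ S} = m := by simp [Fintype.card_coe, hS]
  have hcSc : Fintype.card {x : Fin n // ¬ x ∈ S} = n - m := by
    rw [Fintype.card_subtype_compl]
    simp [Fintype.card_coe, hS]
  let e1 : {x // x ∈ S} ≃ Fin m := Fintype.equivFinOfCardEq hcS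
  let e2 : {x : Fin n // ¬ x ∈ S} ≃ Fin (n - m) := Fintype.equivFinOfCardEq hcSc
  let e : Fin n ≃ Fin (n - m) ⊕ Fin m :=
    ((Equiv.sumCompl (· ∈ S)).symm.trans (Equiv.sumComm _ _)).trans (Equiv.sumCongr e2 e1)
  have he : ∀ v : Fin n, v ∈ (↑S : Set (Fin n)) ↔ e v ∈ Set.range (Sum.inr : Fin m → _) := by
    intro v
    by_cases hv : v ∈ S
    · simpa [e, Equiv.sumCompl_symm_apply_of_pos hv] using hv
    · simpa [e, Equiv.sumCompl_symm_apply_of_neg hv] using hv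
  have h0 : Nat.card {E : Fin n → Fin n → Bool // Ess E ∧ ∀ v ∈ S, Sink E v} =
      Nat.card {E : Fin n → Fin n → Bool // Ess E ∧ ∀ v ∈ (↑S : Set (Fin n)), Sink E v} := by
    apply Nat.card_congr
    apply Equiv.subtypeEquivRight
    intro E
    simp
  rw [h0, Nat.card_congr (essSinkEquiv e (↑S) (Set.range Sum.inr) he),
    Nat.card_congr (sumEquiv (β := Fin (n - m)) (γ := Fin m)), card_sigma_good,
    Fintype.card_fin, Fintype.card_fin, essentialCount_eq]

/-- The recursion for the number of essential DAGs:
`a_0 = 1` and, for `n ≥ 1`,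
`a_n = Σ_{m=1}^{n} (-1)^{m+1} C(n,m) (2^{n-m} - (n-m))^m a_{n-m}` (in `ℤ`). -/
theorem essentialCount_recursion :
    essentialCount 0 = 1 ∧
      ∀ n : ℕ, 1 ≤ n →
        (essentialCount n : ℤ) =
          ∑ m ∈ Finset.Icc 1 n,
            (-1 : ℤ) ^ (m + 1) * (n.choose m : ℤ) *
              ((2 : ℤ) ^ (n - m) - ((n - m : ℕ) : ℤ)) ^ m *
              (essentialCount (n - m) : ℤ) := by
  classical
  constructor
  · rw [essentialCount_eq]
    have h1 : Subsingleton {E : Fin 0 → Fin 0 → Bool // Ess E} :=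
      ⟨fun a b => Subtype.ext (funext fun x => x.elim0)⟩
    have h2 : Nonempty {E : Fin 0 → Fin 0 → Bool // Ess E} :=
      ⟨⟨fun x _ => x.elim0, ⟨⟨fun a => a.elim0, fun a => a.elim0⟩, fun a => a.elim0⟩⟩⟩
    exact Nat.card_eq_one_iff_unique.2 ⟨h1, h2⟩
  intro n hn
  haveI : NeZero n := ⟨by omega⟩
  letI : Fintype {E : Fin n → Fin n → Bool // Ess E} := Fintype.ofFinite _
  let sk : {E : Fin n → Fin n → Bool // Ess E} → Finset (Fin n) :=
    fun E => Finset.univ.filter (fun v => ∀ x, E.1 v x = false)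
  have hsk : ∀ (E : {E : Fin n → Fin n → Bool // Ess E}) (S : Finset (Fin n)),
      (∀ v ∈ S, Sink E.1 v) ↔ S ⊆ sk E := by
    intro E S
    constructor
    · intro h v hv
      simp only [sk, Finset.mem_filter, Finset.mem_univ, true_and]
      exact h v hv
    · intro h v hv
      have := h hv
      simp only [sk, Finset.mem_filter, Finset.mem_univ, true_and] at this
      exact this
  have hne : ∀ E : {E : Fin n → Fin n → Bool // Ess E}, sk E ≠ ∅ := by
    intro E hcon
    obtain ⟨v, hv⟩ := exists_sink E.2.1
    have hm : v ∈ sk E := by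
      simp only [sk, Finset.mem_filter, Finset.mem_univ, true_and]
      exact hv
    rw [hcon] at hm
    exact absurd hm (Finset.notMem_empty v)
  have key : ∀ S : Finset (Fin n),
      ((Nat.card {E : Fin n → Fin n → Bool // Ess E ∧ ∀ v ∈ S, Sink E v} : ℤ)) =
        ∑ E : {E : Fin n → Fin n → Bool // Ess E}, if S ⊆ sk E then (1 : ℤ) else 0 := by
    intro S
    have e1 : {x : {E : Fin n → Fin n → Bool // Ess E} // S ⊆ sk x} ≃
        {E : Fin n → Fin n → Bool // Ess E ∧ ∀ v ∈ S, Sink E v} :=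
      (Equiv.subtypeEquivRight (fun E => (hsk E S).symm)).trans
        (Equiv.subtypeSubtypeEquivSubtypeInter Ess (fun E => ∀ v ∈ S, Sink E v))
    rw [← Nat.card_congr e1, Nat.card_eq_fintype_card, Fintype.card_subtype,
      Finset.card_filter]
    push_cast
    rfl
  -- the alternating sum over all subsets vanishes
  have main : (0 : ℤ) = ∑ S ∈ (Finset.univ : Finset (Fin n)).powerset,
      (-1 : ℤ) ^ S.card *
        (Nat.card {E : Fin n → Fin n → Bool // Ess E ∧ ∀ v ∈ S, Sink E v} : ℤ) := by
    have hrw : ∀ S ∈ (Finset.univ : Finset (Fin n)).powerset,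
        (-1 : ℤ) ^ S.card *
          (Nat.card {E : Fin n → Fin n → Bool // Ess E ∧ ∀ v ∈ S, Sink E v} : ℤ) =
        ∑ E : {E : Fin n → Fin n → Bool // Ess E},
          (-1 : ℤ) ^ S.card * (if S ⊆ sk E then (1 : ℤ) else 0) := by
      intro S _
      rw [key S, Finset.mul_sum]
    rw [Finset.sum_congr rfl hrw, Finset.sum_comm]
    have hz : ∀ E : {E : Fin n → Fin n → Bool // Ess E},
        ∑ S ∈ (Finset.univ : Finset (Fin n)).powerset,
          (-1 : ℤ) ^ S.card * (if S ⊆ sk E then (1 : ℤ) else 0) = 0 := by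
      intro E
      simp only [mul_ite, mul_one, mul_zero]
      rw [← Finset.sum_filter]
      have hfil : (Finset.univ : Finset (Fin n)).powerset.filter (fun S => S ⊆ sk E) =
          (sk E).powerset := by
        ext S
        simp [Finset.mem_powerset]
      rw [hfil, Finset.sum_powerset_neg_one_pow_card, if_neg (hne E)]
    rw [Finset.sum_congr rfl (fun E _ => hz E), Finset.sum_const, smul_zero]
  -- group by cardinality
  have hgroup : ∑ S ∈ (Finset.univ : Finset (Fin n)).powerset,
      (-1 : ℤ) ^ S.card *
        (Nat.card {E : Fin n → Fin n → Bool // Ess E ∧ ∀ v ∈ S, Sink E v} : ℤ) =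
      ∑ j ∈ Finset.range (n + 1), (-1 : ℤ) ^ j * (n.choose j : ℤ) *
        (((2 ^ (n - j) - (n - j)) ^ j * essentialCount (n - j) : ℕ) : ℤ) := by
    rw [Finset.sum_powerset]
    rw [Finset.card_univ, Fintype.card_fin]
    refine Finset.sum_congr rfl (fun j hj => ?_)
    have hconst : ∀ S ∈ Finset.powersetCard j (Finset.univ : Finset (Fin n)),
        (-1 : ℤ) ^ S.card *
          (Nat.card {E : Fin n → Fin n → Bool // Ess E ∧ ∀ v ∈ S, Sink E v} : ℤ) =
        (-1 : ℤ) ^ j * (((2 ^ (n - j) - (n - j)) ^ j * essentialCount (n - j) : ℕ) : ℤ) := by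
      intro S hS
      have hcard : S.card = j := (Finset.mem_powersetCard.1 hS).2
      rw [hcard, card_with_sinks S hcard]
    rw [Finset.sum_congr rfl hconst, Finset.sum_const, Finset.card_powersetCard,
      Finset.card_univ, Fintype.card_fin, nsmul_eq_mul]
    push_cast
    ring
  rw [hgroup] at main
  -- split off the j = 0 term
  have hsplit : Finset.range (n + 1) = insert 0 (Finset.Icc 1 n) := by
    ext j
    simp only [Finset.mem_range, Finset.mem_insert, Finset.mem_Icc]
    omega
  rw [hsplit, Finset.sum_insert (by simp)] at main
  have hzero : (-1 : ℤ) ^ 0 * (n.choose 0 : ℤ) *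
      (((2 ^ (n - 0) - (n - 0)) ^ 0 * essentialCount (n - 0) : ℕ) : ℤ) =
      (essentialCount n : ℤ) := by
    simp
  rw [hzero] at main
  have : (essentialCount n : ℤ) =
      - ∑ j ∈ Finset.Icc 1 n, (-1 : ℤ) ^ j * (n.choose j : ℤ) *
        (((2 ^ (n - j) - (n - j)) ^ j * essentialCount (n - j) : ℕ) : ℤ) := by
    linarith [main]
  rw [this, ← Finset.sum_neg_distrib]
  refine Finset.sum_congr rfl (fun j hj => ?_)
  have hle : n - j ≤ 2 ^ (n - j) := Nat.lt_two_pow_self.le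
  have hcast : (((2 ^ (n - j) - (n - j)) ^ j * essentialCount (n - j) : ℕ) : ℤ) =
      ((2 : ℤ) ^ (n - j) - ((n - j : ℕ) : ℤ)) ^ j * (essentialCount (n - j) : ℤ) := by
    push_cast [Nat.cast_sub hle]
    ring
  rw [hcast]
  ring
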